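/- arXiv:2105.14155 — 3 statements merged into one kernel-verified Lean document; each statement's English description precedes it below -/
import Mathlib

section
/- Let G(y) be a differentiable matrix-valued function of a real parameter y such that G(y) has full column rank for all y. Then the pseudoinverse G†(y) = (G(y)ᵀG(y))⁻¹G(y)ᵀ is differentiable and ∂G†/∂y = (GᵀG)⁻¹ (∂G/∂y)ᵀ (I − G G†) − G† (∂G/∂y) G†. -/
open Matrix

attribute [local instance] Matrix.normedAddCommGroup Matrix.normedSpace

section aux
variable {y : ℝ}

lemma hasDerivAt_matrix {p q : ℕ} {f : ℝ → Matrix (Fin p) (Fin q) ℝ}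
    {f' : Matrix (Fin p) (Fin q) ℝ} :
    HasDerivAt f f' y ↔ ∀ i j, HasDerivAt (fun t => f t i j) (f' i j) y := by
  exact hasDerivAt_pi.trans (forall_congr' fun i => hasDerivAt_pi)

lemma HasDerivAt.matrix_mul {p q r : ℕ} {A : ℝ → Matrix (Fin p) (Fin q) ℝ}
    {B : ℝ → Matrix (Fin q) (Fin r) ℝ} {A' B'}
    (hA : HasDerivAt A A' y) (hB : HasDerivAt B B' y) :
    HasDerivAt (fun t => A t * B t) (A' * B y + A y * B' ) y := by
  rw [hasDerivAt_matrix] at *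
  intro i j
  simp only [Matrix.mul_apply, Matrix.add_apply]
  rw [← Finset.sum_add_distrib]
  exact HasDerivAt.fun_sum fun k (_ : k ∈ Finset.univ) => ((hA i k).mul (hB k j))

lemma HasDerivAt.matrix_transpose {p q : ℕ} {A : ℝ → Matrix (Fin p) (Fin q) ℝ} {A'}
    (hA : HasDerivAt A A' y) : HasDerivAt (fun t => (A t)ᵀ) A'ᵀ y := by
  rw [hasDerivAt_matrix] at *
  intro i j
  exact hA j i

lemma diff_det {k : ℕ} {M : ℝ → Matrix (Fin k) (Fin k) ℝ}
    (h : ∀ i j, DifferentiableAt ℝ (fun t => M t i j) y) :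
    DifferentiableAt ℝ (fun t => (M t).det) y := by
  simp only [Matrix.det_apply, Units.smul_def, zsmul_eq_mul]
  refine DifferentiableAt.fun_sum fun σ _ => ?_
  exact (DifferentiableAt.fun_finsetProd fun i _ => h _ _).const_mul _

lemma diff_inv {k : ℕ} {M : ℝ → Matrix (Fin k) (Fin k) ℝ}
    (h : ∀ i j, DifferentiableAt ℝ (fun t => M t i j) y)
    (hd : (M y).det ≠ 0) :
    DifferentiableAt ℝ (fun t => (M t)⁻¹) y := by
  have : (fun t => (M t)⁻¹) = fun t => ((M t).det)⁻¹ • (M t).adjugate := by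
    funext t
    rw [Matrix.inv_def, Ring.inverse_eq_inv']
  rw [this]
  refine DifferentiableAt.smul ((diff_det h).inv hd) ?_
  refine differentiableAt_pi.mpr fun i => ?_
  refine differentiableAt_pi.mpr fun j => ?_
  have : (fun t => (M t).adjugate i j) = fun t => ((M t).updateRow j (Pi.single i 1)).det := by
    funext t; rw [Matrix.adjugate_apply]
  rw [this]
  refine diff_det fun a b => ?_
  by_cases hab : a = j
  · subst hab
    simp only [Matrix.updateRow_apply, if_pos rfl]
    exact differentiableAt_const _
  · simp only [Matrix.updateRow_apply, hab, if_false]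
    exact h a b

end aux

/-- Golub–Pereyra derivative formula for the pseudoinverse: if `G(y)` is differentiable
with full column rank for all `y`, then `G†(y) = (GᵀG)⁻¹Gᵀ` is differentiable with
`∂G†/∂y = (GᵀG)⁻¹ (∂G/∂y)ᵀ (I − G G†) − G† (∂G/∂y) G†`. -/
theorem deriv_pseudoinverse
    {m n : ℕ} (G G' : ℝ → Matrix (Fin m) (Fin n) ℝ)
    (hdiff : ∀ y, HasDerivAt G (G' y) y)
    (hrank : ∀ y, IsUnit ((G y)ᵀ * G y)) :
    ∀ y : ℝ,
      HasDerivAt (fun t => ((G t)ᵀ * G t)⁻¹ * (G t)ᵀ)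
        (((G y)ᵀ * G y)⁻¹ * (G' y)ᵀ * (1 - G y * (((G y)ᵀ * G y)⁻¹ * (G y)ᵀ)) -
          (((G y)ᵀ * G y)⁻¹ * (G y)ᵀ) * G' y * (((G y)ᵀ * G y)⁻¹ * (G y)ᵀ)) y := by
  intro y
  set A : ℝ → Matrix (Fin n) (Fin n) ℝ := fun t => (G t)ᵀ * G t with hAdef
  have hdet : ∀ t, IsUnit (A t).det := fun t =>
    (Matrix.isUnit_iff_isUnit_det _).mp (hrank t)
  have hA : HasDerivAt A ((G' y)ᵀ * G y + (G y)ᵀ * G' y) y :=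
    ((hdiff y).matrix_transpose).matrix_mul (hdiff y)
  -- differentiability of t ↦ (A t)⁻¹
  have hent : ∀ i j, DifferentiableAt ℝ (fun t => A t i j) y := by
    intro i j
    exact (hasDerivAt_matrix.mp hA i j).differentiableAt
  have hdiffinv : DifferentiableAt ℝ (fun t => (A t)⁻¹) y :=
    diff_inv hent ((hdet y).ne_zero)
  set K := deriv (fun t => (A t)⁻¹) y with hKdef
  have hK : HasDerivAt (fun t => (A t)⁻¹) K y := hdiffinv.hasDerivAt
  -- derivative of A * A⁻¹ = 1
  have hone : (fun t => A t * (A t)⁻¹) = fun _ => (1 : Matrix (Fin n) (Fin n) ℝ) := by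
    funext t
    exact Matrix.mul_nonsing_inv _ (hdet t)
  have h0 : HasDerivAt (fun t => A t * (A t)⁻¹)
      (((G' y)ᵀ * G y + (G y)ᵀ * G' y) * (A y)⁻¹ + A y * K) y := hA.matrix_mul hK
  rw [hone] at h0
  have h0' : ((G' y)ᵀ * G y + (G y)ᵀ * G' y) * (A y)⁻¹ + A y * K = 0 :=
    h0.unique (hasDerivAt_const y 1)
  have hKval : K = -((A y)⁻¹ * (((G' y)ᵀ * G y + (G y)ᵀ * G' y) * (A y)⁻¹)) := by
    have h1 : A y * K = -(((G' y)ᵀ * G y + (G y)ᵀ * G' y) * (A y)⁻¹) := by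
      linear_combination (norm := noncomm_ring) h0'
    have h2 : (A y)⁻¹ * (A y * K) = K := by
      rw [← Matrix.mul_assoc, Matrix.nonsing_inv_mul _ (hdet y), Matrix.one_mul]
    rw [← h2, h1, Matrix.mul_neg]
  -- product rule for A⁻¹ * Gᵀ
  have hmain : HasDerivAt (fun t => (A t)⁻¹ * (G t)ᵀ)
      (K * (G y)ᵀ + (A y)⁻¹ * (G' y)ᵀ) y := hK.matrix_mul (hdiff y).matrix_transpose
  have heq : K * (G y)ᵀ + (A y)⁻¹ * (G' y)ᵀ =
      (A y)⁻¹ * (G' y)ᵀ * (1 - G y * ((A y)⁻¹ * (G y)ᵀ)) -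
        ((A y)⁻¹ * (G y)ᵀ) * G' y * ((A y)⁻¹ * (G y)ᵀ) := by
    rw [hKval]
    simp only [Matrix.mul_sub, Matrix.sub_mul, Matrix.mul_add, Matrix.add_mul,
      Matrix.neg_mul, Matrix.mul_neg, Matrix.mul_one, Matrix.one_mul, Matrix.mul_assoc]
    abel
  rw [heq] at hmain
  exact hmain
end

section
/- Let G(y) be a differentiable full-column-rank matrix function and let P⊥(y) = I − G(y)G†(y). Then the derivative of P⊥ satisfies ∂P⊥/∂y = −P⊥ (∂G/∂y) G† − (P⊥ (∂G/∂y) G†)ᵀ. -/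
open Matrix

attribute [local instance] Matrix.normedAddCommGroup Matrix.normedSpace

private lemma hasDerivAt_entrywise {m n : ℕ} {f : ℝ → Matrix (Fin m) (Fin n) ℝ}
    {f' : Matrix (Fin m) (Fin n) ℝ} {y : ℝ} :
    HasDerivAt f f' y ↔ ∀ i j, HasDerivAt (fun t => f t i j) (f' i j) y := by
  exact hasDerivAt_pi.trans (forall_congr' fun i => hasDerivAt_pi)

private lemma hasDerivAt_matmul {m n p : ℕ} {f : ℝ → Matrix (Fin m) (Fin n) ℝ}
    {g : ℝ → Matrix (Fin n) (Fin p) ℝ} {f' : Matrix (Fin m) (Fin n) ℝ}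
    {g' : Matrix (Fin n) (Fin p) ℝ} {y : ℝ}
    (hf : HasDerivAt f f' y) (hg : HasDerivAt g g' y) :
    HasDerivAt (fun t => f t * g t) (f' * g y + f y * g') y := by
  rw [hasDerivAt_entrywise] at hf hg ⊢
  intro i j
  have : ((f' * g y + f y * g') : Matrix (Fin m) (Fin p) ℝ) i j
      = ∑ k, (f' i k * g y k j + f y i k * g' k j) := by
    simp [Matrix.mul_apply, Matrix.add_apply, Finset.sum_add_distrib]
  rw [this]
  have : (fun t => (f t * g t) i j) = fun t => ∑ k, f t i k * g t k j := by
    funext t; simp [Matrix.mul_apply]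
  rw [this]
  exact HasDerivAt.fun_sum fun k _ => (hf i k).mul (hg k j)

private lemma hasDerivAt_transposeM {m n : ℕ} {f : ℝ → Matrix (Fin m) (Fin n) ℝ}
    {f' : Matrix (Fin m) (Fin n) ℝ} {y : ℝ} (hf : HasDerivAt f f' y) :
    HasDerivAt (fun t => (f t)ᵀ) f'ᵀ y := by
  rw [hasDerivAt_entrywise] at hf ⊢
  intro i j
  exact hf j i

private lemma differentiableAt_detM {n : ℕ} {M : ℝ → Matrix (Fin n) (Fin n) ℝ} {y : ℝ}
    (h : ∀ i j, DifferentiableAt ℝ (fun t => M t i j) y) :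
    DifferentiableAt ℝ (fun t => (M t).det) y := by
  simp only [Matrix.det_apply']
  exact DifferentiableAt.fun_sum fun σ _ =>
    (DifferentiableAt.fun_finsetProd fun i _ => h (σ i) i).const_mul _

private lemma differentiableAt_invM {n : ℕ} {M : ℝ → Matrix (Fin n) (Fin n) ℝ} {y : ℝ}
    (h : ∀ i j, DifferentiableAt ℝ (fun t => M t i j) y) (hu : IsUnit (M y)) :
    DifferentiableAt ℝ (fun t => (M t)⁻¹) y := by
  have hdet : (M y).det ≠ 0 := ((Matrix.isUnit_iff_isUnit_det _).mp hu).ne_zero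
  refine differentiableAt_pi.mpr fun i => ?_
  refine differentiableAt_pi.mpr fun j => ?_
  have heq : (fun t => (M t)⁻¹ i j) = fun t => ((M t).det)⁻¹ * (M t).adjugate i j := by
    funext t
    rw [Matrix.inv_def, Matrix.smul_apply, Ring.inverse_eq_inv', smul_eq_mul]
  rw [heq]
  refine ((differentiableAt_detM h).inv hdet).mul ?_
  have heq2 : (fun t => (M t).adjugate i j)
      = fun t => ((M t).updateRow j (Pi.single i 1)).det := by
    funext t; rw [Matrix.adjugate_apply]
  rw [heq2]
  refine differentiableAt_detM fun a b => ?_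
  by_cases hab : a = j
  · simp [Matrix.updateRow_apply, hab]
  · simp only [Matrix.updateRow_apply, if_neg hab]
    exact h a b

/-- Golub–Pereyra formula (1.4): for a differentiable full-column-rank matrix function
`G(y)`, the projector `P⊥(y) = I − G(y)G†(y)` satisfies
`∂P⊥/∂y = −P⊥ (∂G/∂y) G† − (P⊥ (∂G/∂y) G†)ᵀ`. -/
theorem deriv_orthogonal_projector
    {m n : ℕ} (G G' : ℝ → Matrix (Fin m) (Fin n) ℝ)
    (hdiff : ∀ y, HasDerivAt G (G' y) y)
    (hrank : ∀ y, IsUnit ((G y)ᵀ * G y)) :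
    ∀ y : ℝ,
      HasDerivAt (fun t => (1 : Matrix (Fin m) (Fin m) ℝ) - G t * (((G t)ᵀ * G t)⁻¹ * (G t)ᵀ))
        (-((1 - G y * (((G y)ᵀ * G y)⁻¹ * (G y)ᵀ)) * G' y * (((G y)ᵀ * G y)⁻¹ * (G y)ᵀ)) -
          ((1 - G y * (((G y)ᵀ * G y)⁻¹ * (G y)ᵀ)) * G' y * (((G y)ᵀ * G y)⁻¹ * (G y)ᵀ))ᵀ) y := by
  intro y
  -- A = GᵀG and its derivative
  have hAd : HasDerivAt (fun s => (G s)ᵀ * G s) ((G' y)ᵀ * G y + (G y)ᵀ * G' y) y :=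
    hasDerivAt_matmul (hasDerivAt_transposeM (hdiff y)) (hdiff y)
  have hdet : IsUnit ((G y)ᵀ * G y).det := (Matrix.isUnit_iff_isUnit_det _).mp (hrank y)
  -- H = A⁻¹ is differentiable
  have hHdiff : DifferentiableAt ℝ (fun s => ((G s)ᵀ * G s)⁻¹) y :=
    differentiableAt_invM (fun i j => (hasDerivAt_entrywise.mp hAd i j).differentiableAt)
      (hrank y)
  set H' := deriv (fun s => ((G s)ᵀ * G s)⁻¹) y with hH'def
  have hH : HasDerivAt (fun s => ((G s)ᵀ * G s)⁻¹) H' y := hHdiff.hasDerivAt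
  set g := G y
  set g' := G' y
  set A' := g'ᵀ * g + gᵀ * g'
  set Hy := (gᵀ * g)⁻¹ with hHy
  -- pin down H'
  have hmul : HasDerivAt (fun s => ((G s)ᵀ * G s) * ((G s)ᵀ * G s)⁻¹)
      (A' * Hy + (gᵀ * g) * H') y := hasDerivAt_matmul hAd hH
  have hone : (fun s => ((G s)ᵀ * G s) * ((G s)ᵀ * G s)⁻¹)
      = fun _ => (1 : Matrix (Fin n) (Fin n) ℝ) := by
    funext s
    exact Matrix.mul_nonsing_inv _ ((Matrix.isUnit_iff_isUnit_det _).mp (hrank s))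
  rw [hone] at hmul
  have h0 : A' * Hy + (gᵀ * g) * H' = 0 := hmul.unique (hasDerivAt_const y 1)
  have h1 : (gᵀ * g) * H' = -(A' * Hy) := eq_neg_of_add_eq_zero_right h0
  have hHA : Hy * (gᵀ * g) = 1 := Matrix.nonsing_inv_mul _ hdet
  have hH'eq : H' = -(Hy * (A' * Hy)) := by
    calc H' = (Hy * (gᵀ * g)) * H' := by rw [hHA, Matrix.one_mul]
    _ = Hy * ((gᵀ * g) * H') := by rw [Matrix.mul_assoc]
    _ = -(Hy * (A' * Hy)) := by rw [h1, Matrix.mul_neg]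
  -- symmetry of Hy
  have hHt : Hyᵀ = Hy := by
    rw [hHy, Matrix.transpose_nonsing_inv, Matrix.transpose_mul, Matrix.transpose_transpose]
  -- derivative of G * (H * Gᵀ)
  have hQ : HasDerivAt (fun t => G t * (((G t)ᵀ * G t)⁻¹ * (G t)ᵀ))
      (g' * (Hy * gᵀ) + g * (H' * gᵀ + Hy * g'ᵀ)) y :=
    hasDerivAt_matmul (hdiff y) (hasDerivAt_matmul hH (hasDerivAt_transposeM (hdiff y)))
  have hP := hQ.const_sub (1 : Matrix (Fin m) (Fin m) ℝ)
  convert hP using 1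
  case e'_4 => rfl
  case e'_5 => rfl
  case e'_6 => rfl
  rw [hH'eq]
  simp only [A', Matrix.transpose_mul, Matrix.transpose_sub, Matrix.transpose_one,
    Matrix.transpose_transpose, hHt, Matrix.sub_mul, Matrix.mul_sub, Matrix.one_mul,
    Matrix.mul_one, Matrix.add_mul, Matrix.mul_add, Matrix.neg_mul, Matrix.mul_neg,
    Matrix.mul_assoc]
  abel
end

section
/- The one-dimensional linear B-spline framelet filters with reflexive boundary conditions, given by the masks w⁽⁰⁾ = ¼[1,2,1], w⁽¹⁾ = (√2/4)[1,0,−1], w⁽²⁾ = ¼[−1,2,−1] (with boundary rows modified as in the matrices W₀, W₁, W₂), satisfy W₀ᵀW₀ + W₁ᵀW₁ + W₂ᵀW₂ = I_n. -/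
open Matrix

/-- The linear B-spline framelet analysis matrix in one dimension, low-pass filter
with reflexive boundary conditions: tridiagonal with diagonal `(3,2,…,2,3)/4` and
off-diagonal entries `1/4`. -/
noncomputable def bsplineW0 (n : ℕ) : Matrix (Fin n) (Fin n) ℝ := fun i j =>
  if i.val = j.val then (if i.val = 0 ∨ i.val = n - 1 then 3 / 4 else 2 / 4)
  else if i.val + 1 = j.val ∨ j.val + 1 = i.val then 1 / 4 else 0

/-- First high-pass filter: `(√2/4)·`(tridiagonal with diagonal `(−1,0,…,0,1)`,
subdiagonal `−1`, superdiagonal `1`). -/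
noncomputable def bsplineW1 (n : ℕ) : Matrix (Fin n) (Fin n) ℝ := fun i j =>
  (Real.sqrt 2 / 4) *
    (if i.val = j.val then (if i.val = 0 then -1 else if i.val = n - 1 then 1 else 0)
     else if i.val + 1 = j.val then 1
     else if j.val + 1 = i.val then -1 else 0)

/-- Second high-pass filter: `¼·`(tridiagonal with diagonal `(1,2,…,2,1)`, sub- and
superdiagonal `−1`). -/
noncomputable def bsplineW2 (n : ℕ) : Matrix (Fin n) (Fin n) ℝ := fun i j =>
  (1 / 4 : ℝ) *
    (if i.val = j.val then (if i.val = 0 ∨ i.val = n - 1 then 1 else 2)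
     else if i.val + 1 = j.val ∨ j.val + 1 = i.val then -1 else 0)

noncomputable def W0e (n k i : ℕ) : ℝ :=
  if k = i then (if k = 0 ∨ k = n - 1 then 3 / 4 else 2 / 4)
  else if k + 1 = i ∨ i + 1 = k then 1 / 4 else 0

noncomputable def Le (n k i : ℕ) : ℝ :=
  if k = i then (if k = 0 then -1 else if k = n - 1 then 1 else 0)
  else if k + 1 = i then 1
  else if i + 1 = k then -1 else 0

noncomputable def W2e (n k i : ℕ) : ℝ :=
  (1 / 4 : ℝ) *
    (if k = i then (if k = 0 ∨ k = n - 1 then 1 else 2)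
     else if k + 1 = i ∨ i + 1 = k then -1 else 0)

noncomputable def Lmat (n : ℕ) : Matrix (Fin n) (Fin n) ℝ := fun i j =>
  if i.val = j.val then (if i.val = 0 then -1 else if i.val = n - 1 then 1 else 0)
  else if i.val + 1 = j.val then 1
  else if j.val + 1 = i.val then -1 else 0

lemma w0_diag_bnd {n k i : ℕ} (hki : k = i) (h : k = 0 ∨ k = n - 1) : W0e n k i = 3 / 4 := by
  unfold W0e; split_ifs <;> (try (exfalso; omega)) <;> norm_num
lemma w0_diag_int {n k i : ℕ} (hki : k = i) (h0 : k ≠ 0) (h1 : k ≠ n - 1) : W0e n k i = 1 / 2 := by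
  unfold W0e; split_ifs <;> (try (exfalso; omega)) <;> norm_num
lemma w0_off {n k i : ℕ} (h : k + 1 = i ∨ i + 1 = k) : W0e n k i = 1 / 4 := by
  unfold W0e; split_ifs <;> (try (exfalso; omega)) <;> norm_num
lemma w0_zero {n k i : ℕ} (h1 : k ≠ i) (h2 : k + 1 ≠ i) (h3 : i + 1 ≠ k) : W0e n k i = 0 := by
  unfold W0e; split_ifs <;> (try (exfalso; omega)) <;> norm_num

lemma l_diag0 {n k i : ℕ} (hki : k = i) (h : k = 0) : Le n k i = -1 := by
  unfold Le; split_ifs <;> (try (exfalso; omega)) <;> norm_num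
lemma l_diag_last {n k i : ℕ} (hki : k = i) (h : k = n - 1) (h0 : k ≠ 0) : Le n k i = 1 := by
  unfold Le; split_ifs <;> (try (exfalso; omega)) <;> norm_num
lemma l_diag_int {n k i : ℕ} (hki : k = i) (h0 : k ≠ 0) (h1 : k ≠ n - 1) : Le n k i = 0 := by
  unfold Le; split_ifs <;> (try (exfalso; omega)) <;> norm_num
lemma l_sup {n k i : ℕ} (h : k + 1 = i) : Le n k i = 1 := by
  unfold Le; split_ifs <;> (try (exfalso; omega)) <;> norm_num
lemma l_sub {n k i : ℕ} (h : i + 1 = k) : Le n k i = -1 := by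
  unfold Le; split_ifs <;> (try (exfalso; omega)) <;> norm_num
lemma l_zero {n k i : ℕ} (h1 : k ≠ i) (h2 : k + 1 ≠ i) (h3 : i + 1 ≠ k) : Le n k i = 0 := by
  unfold Le; split_ifs <;> (try (exfalso; omega)) <;> norm_num

lemma w2_diag_bnd {n k i : ℕ} (hki : k = i) (h : k = 0 ∨ k = n - 1) : W2e n k i = 1 / 4 := by
  unfold W2e; split_ifs <;> (try (exfalso; omega)) <;> norm_num
lemma w2_diag_int {n k i : ℕ} (hki : k = i) (h0 : k ≠ 0) (h1 : k ≠ n - 1) : W2e n k i = 1 / 2 := by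
  unfold W2e; split_ifs <;> (try (exfalso; omega)) <;> norm_num
lemma w2_off {n k i : ℕ} (h : k + 1 = i ∨ i + 1 = k) : W2e n k i = -(1 / 4) := by
  unfold W2e; split_ifs <;> (try (exfalso; omega)) <;> norm_num
lemma w2_zero {n k i : ℕ} (h1 : k ≠ i) (h2 : k + 1 ≠ i) (h3 : i + 1 ≠ k) : W2e n k i = 0 := by
  unfold W2e; split_ifs <;> (try (exfalso; omega)) <;> norm_num

lemma key_le (n i j : ℕ) (hn : 3 ≤ n) (hi : i < n) (hj : j < n) (hij : i ≤ j) :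
    (∑ k ∈ Finset.range n,
      (W0e n k i * W0e n k j + 1 / 8 * (Le n k i * Le n k j) + W2e n k i * W2e n k j)) =
      if i = j then 1 else 0 := by
  rcases (by omega : j = i ∨ j = i + 1 ∨ j = i + 2 ∨ i + 3 ≤ j) with hd | rfl | rfl | hfar
  · -- diagonal
    rw [hd, if_pos rfl]
    clear hd hj hij
    rcases (by omega : i = 0 ∨ i = n - 1 ∨ (1 ≤ i ∧ i + 1 ≤ n - 1)) with rfl | hlast | ⟨h1, h2⟩
    · have hsub : ({0, 1} : Finset ℕ) ⊆ Finset.range n := by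
        intro k hk; simp at hk; simp; omega
      have hz : ∀ k ∈ Finset.range n, k ∉ ({0, 1} : Finset ℕ) →
          W0e n k 0 * W0e n k 0 + 1 / 8 * (Le n k 0 * Le n k 0) + W2e n k 0 * W2e n k 0 = 0 := by
        intro k hk hk'; simp at hk'
        rw [w0_zero (by omega) (by omega) (by omega), l_zero (by omega) (by omega) (by omega),
          w2_zero (by omega) (by omega) (by omega)]; ring
      rw [← Finset.sum_subset hsub hz, Finset.sum_pair (by norm_num)]
      rw [w0_diag_bnd rfl (Or.inl rfl), l_diag0 rfl rfl, w2_diag_bnd rfl (Or.inl rfl),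
        w0_off (Or.inr rfl), l_sub rfl, w2_off (Or.inr rfl)]
      norm_num
    · have hsub : ({n - 2, n - 1} : Finset ℕ) ⊆ Finset.range n := by
        intro k hk; simp at hk; simp; omega
      have hz : ∀ k ∈ Finset.range n, k ∉ ({n - 2, n - 1} : Finset ℕ) →
          W0e n k i * W0e n k i + 1 / 8 * (Le n k i * Le n k i) + W2e n k i * W2e n k i = 0 := by
        intro k hk hk'; simp at hk hk'
        rw [w0_zero (by omega) (by omega) (by omega), l_zero (by omega) (by omega) (by omega),
          w2_zero (by omega) (by omega) (by omega)]; ring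
      rw [← Finset.sum_subset hsub hz, Finset.sum_pair (by omega)]
      rw [w0_off (Or.inl (by omega)), l_sup (by omega), w2_off (Or.inl (by omega)),
        w0_diag_bnd hlast.symm (Or.inr rfl), l_diag_last hlast.symm rfl (by omega),
        w2_diag_bnd hlast.symm (Or.inr rfl)]
      norm_num
    · have hsub : ({i - 1, i, i + 1} : Finset ℕ) ⊆ Finset.range n := by
        intro k hk; simp at hk; simp; omega
      have hz : ∀ k ∈ Finset.range n, k ∉ ({i - 1, i, i + 1} : Finset ℕ) →
          W0e n k i * W0e n k i + 1 / 8 * (Le n k i * Le n k i) + W2e n k i * W2e n k i = 0 := by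
        intro k hk hk'; simp at hk'
        rw [w0_zero (by omega) (by omega) (by omega), l_zero (by omega) (by omega) (by omega),
          w2_zero (by omega) (by omega) (by omega)]; ring
      rw [← Finset.sum_subset hsub hz,
        Finset.sum_insert (by simp; omega), Finset.sum_pair (by omega)]
      rw [w0_off (Or.inl (by omega)), l_sup (by omega), w2_off (Or.inl (by omega)),
        w0_diag_int rfl (by omega) (by omega), l_diag_int rfl (by omega) (by omega),
        w2_diag_int rfl (by omega) (by omega),
        w0_off (Or.inr rfl), l_sub rfl, w2_off (Or.inr rfl)]
      norm_num
  · -- j = i + 1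
    rw [if_neg (by omega)]
    rcases (by omega : i = 0 ∨ (1 ≤ i ∧ i + 2 ≤ n)) with rfl | ⟨h1, h2⟩
    · have hsub : ({0, 1} : Finset ℕ) ⊆ Finset.range n := by
        intro k hk; simp at hk; simp; omega
      have hz : ∀ k ∈ Finset.range n, k ∉ ({0, 1} : Finset ℕ) →
          W0e n k 0 * W0e n k 1 + 1 / 8 * (Le n k 0 * Le n k 1) + W2e n k 0 * W2e n k 1 = 0 := by
        intro k hk hk'; simp at hk'
        rw [w0_zero (n := n) (k := k) (i := 0) (by omega) (by omega) (by omega),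
          l_zero (n := n) (k := k) (i := 0) (by omega) (by omega) (by omega),
          w2_zero (n := n) (k := k) (i := 0) (by omega) (by omega) (by omega)]; ring
      rw [← Finset.sum_subset hsub hz, Finset.sum_pair (by norm_num)]
      rw [w0_diag_bnd rfl (Or.inl rfl), l_diag0 rfl rfl, w2_diag_bnd rfl (Or.inl rfl),
        w0_off (n := n) (k := 0) (i := 1) (Or.inl rfl), l_sup (n := n) (k := 0) (i := 1) rfl,
        w2_off (n := n) (k := 0) (i := 1) (Or.inl rfl),
        w0_off (n := n) (k := 1) (i := 0) (Or.inr rfl), l_sub (n := n) (k := 1) (i := 0) rfl,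
        w2_off (n := n) (k := 1) (i := 0) (Or.inr rfl),
        w0_diag_int rfl (by omega) (by omega), l_diag_int rfl (by omega) (by omega),
        w2_diag_int rfl (by omega) (by omega)]
      norm_num
    · have hsub : ({i - 1, i, i + 1} : Finset ℕ) ⊆ Finset.range n := by
        intro k hk; simp at hk; simp; omega
      have hz : ∀ k ∈ Finset.range n, k ∉ ({i - 1, i, i + 1} : Finset ℕ) →
          W0e n k i * W0e n k (i + 1) + 1 / 8 * (Le n k i * Le n k (i + 1)) +
            W2e n k i * W2e n k (i + 1) = 0 := by
        intro k hk hk'; simp at hk'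
        rw [w0_zero (n := n) (k := k) (i := i) (by omega) (by omega) (by omega),
          l_zero (n := n) (k := k) (i := i) (by omega) (by omega) (by omega),
          w2_zero (n := n) (k := k) (i := i) (by omega) (by omega) (by omega)]; ring
      rw [← Finset.sum_subset hsub hz,
        Finset.sum_insert (by simp; omega), Finset.sum_pair (by omega)]
      rw [w0_zero (n := n) (k := i - 1) (i := i + 1) (by omega) (by omega) (by omega),
        l_zero (n := n) (k := i - 1) (i := i + 1) (by omega) (by omega) (by omega),
        w2_zero (n := n) (k := i - 1) (i := i + 1) (by omega) (by omega) (by omega),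
        w0_diag_int rfl (by omega) (by omega), l_diag_int rfl (by omega) (by omega),
        w2_diag_int rfl (by omega) (by omega),
        w0_off (n := n) (k := i) (i := i + 1) (Or.inl rfl),
        l_sup (n := n) (k := i) (i := i + 1) rfl,
        w2_off (n := n) (k := i) (i := i + 1) (Or.inl rfl),
        w0_off (n := n) (k := i + 1) (i := i) (Or.inr rfl),
        l_sub (n := n) (k := i + 1) (i := i) rfl,
        w2_off (n := n) (k := i + 1) (i := i) (Or.inr rfl)]
      rcases (by omega : i + 1 = n - 1 ∨ (i + 1 ≠ n - 1)) with hb | hb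
      · rw [w0_diag_bnd rfl (Or.inr hb), l_diag_last rfl hb (by omega),
          w2_diag_bnd rfl (Or.inr hb)]
        norm_num
      · rw [w0_diag_int rfl (by omega) hb, l_diag_int rfl (by omega) hb,
          w2_diag_int rfl (by omega) hb]
        norm_num
  · -- j = i + 2
    rw [if_neg (by omega)]
    rcases (by omega : i = 0 ∨ (1 ≤ i ∧ i + 3 ≤ n)) with rfl | ⟨h1, h2⟩
    · have hsub : ({0, 1} : Finset ℕ) ⊆ Finset.range n := by
        intro k hk; simp at hk; simp; omega
      have hz : ∀ k ∈ Finset.range n, k ∉ ({0, 1} : Finset ℕ) →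
          W0e n k 0 * W0e n k 2 + 1 / 8 * (Le n k 0 * Le n k 2) + W2e n k 0 * W2e n k 2 = 0 := by
        intro k hk hk'; simp at hk'
        rw [w0_zero (n := n) (k := k) (i := 0) (by omega) (by omega) (by omega),
          l_zero (n := n) (k := k) (i := 0) (by omega) (by omega) (by omega),
          w2_zero (n := n) (k := k) (i := 0) (by omega) (by omega) (by omega)]; ring
      rw [← Finset.sum_subset hsub hz, Finset.sum_pair (by norm_num)]
      rw [w0_zero (n := n) (k := 0) (i := 2) (by omega) (by omega) (by omega),
        l_zero (n := n) (k := 0) (i := 2) (by omega) (by omega) (by omega),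
        w2_zero (n := n) (k := 0) (i := 2) (by omega) (by omega) (by omega),
        w0_off (n := n) (k := 1) (i := 0) (Or.inr rfl), l_sub (n := n) (k := 1) (i := 0) rfl,
        w2_off (n := n) (k := 1) (i := 0) (Or.inr rfl),
        w0_off (n := n) (k := 1) (i := 2) (Or.inl rfl), l_sup (n := n) (k := 1) (i := 2) rfl,
        w2_off (n := n) (k := 1) (i := 2) (Or.inl rfl)]
      norm_num
    · have hsub : ({i - 1, i, i + 1} : Finset ℕ) ⊆ Finset.range n := by
        intro k hk; simp at hk; simp; omega
      have hz : ∀ k ∈ Finset.range n, k ∉ ({i - 1, i, i + 1} : Finset ℕ) →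
          W0e n k i * W0e n k (i + 2) + 1 / 8 * (Le n k i * Le n k (i + 2)) +
            W2e n k i * W2e n k (i + 2) = 0 := by
        intro k hk hk'; simp at hk'
        rw [w0_zero (n := n) (k := k) (i := i) (by omega) (by omega) (by omega),
          l_zero (n := n) (k := k) (i := i) (by omega) (by omega) (by omega),
          w2_zero (n := n) (k := k) (i := i) (by omega) (by omega) (by omega)]; ring
      rw [← Finset.sum_subset hsub hz,
        Finset.sum_insert (by simp; omega), Finset.sum_pair (by omega)]
      rw [w0_zero (n := n) (k := i - 1) (i := i + 2) (by omega) (by omega) (by omega),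
        l_zero (n := n) (k := i - 1) (i := i + 2) (by omega) (by omega) (by omega),
        w2_zero (n := n) (k := i - 1) (i := i + 2) (by omega) (by omega) (by omega),
        w0_zero (n := n) (k := i) (i := i + 2) (by omega) (by omega) (by omega),
        l_zero (n := n) (k := i) (i := i + 2) (by omega) (by omega) (by omega),
        w2_zero (n := n) (k := i) (i := i + 2) (by omega) (by omega) (by omega),
        w0_off (n := n) (k := i + 1) (i := i) (Or.inr rfl),
        l_sub (n := n) (k := i + 1) (i := i) rfl,
        w2_off (n := n) (k := i + 1) (i := i) (Or.inr rfl),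
        w0_off (n := n) (k := i + 1) (i := i + 2) (Or.inl rfl),
        l_sup (n := n) (k := i + 1) (i := i + 2) rfl,
        w2_off (n := n) (k := i + 1) (i := i + 2) (Or.inl rfl)]
      ring
  · -- far apart
    rw [if_neg (by omega)]
    apply Finset.sum_eq_zero
    intro k hk
    rcases (by omega :
        (k ≠ i ∧ k + 1 ≠ i ∧ i + 1 ≠ k) ∨ (k ≠ j ∧ k + 1 ≠ j ∧ j + 1 ≠ k)) with
      ⟨h1, h2, h3⟩ | ⟨h1, h2, h3⟩
    · rw [w0_zero h1 h2 h3, l_zero h1 h2 h3, w2_zero h1 h2 h3]; ring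
    · rw [w0_zero h1 h2 h3, l_zero h1 h2 h3, w2_zero h1 h2 h3]; ring

lemma key (n i j : ℕ) (hn : 3 ≤ n) (hi : i < n) (hj : j < n) :
    (∑ k ∈ Finset.range n,
      (W0e n k i * W0e n k j + 1 / 8 * (Le n k i * Le n k j) + W2e n k i * W2e n k j)) =
      if i = j then 1 else 0 := by
  rcases le_total i j with h | h
  · exact key_le n i j hn hi hj h
  · have h2 := key_le n j i hn hj hi h
    calc (∑ k ∈ Finset.range n,
        (W0e n k i * W0e n k j + 1 / 8 * (Le n k i * Le n k j) + W2e n k i * W2e n k j))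
        = ∑ k ∈ Finset.range n,
          (W0e n k j * W0e n k i + 1 / 8 * (Le n k j * Le n k i) + W2e n k j * W2e n k i) :=
          Finset.sum_congr rfl (fun k _ => by ring)
      _ = if j = i then 1 else 0 := h2
      _ = if i = j then 1 else 0 := by
          rcases eq_or_ne i j with rfl | hne
          · simp
          · rw [if_neg (Ne.symm hne), if_neg hne]

/-- The linear B-spline framelet filters with reflexive boundary conditions satisfy the
Parseval identity `W₀ᵀW₀ + W₁ᵀW₁ + W₂ᵀW₂ = I`. -/
theorem bspline_framelet_parseval (n : ℕ) (hn : 3 ≤ n) :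
    (bsplineW0 n)ᵀ * bsplineW0 n + (bsplineW1 n)ᵀ * bsplineW1 n +
      (bsplineW2 n)ᵀ * bsplineW2 n = 1 := by
  have h1 : bsplineW1 n = (Real.sqrt 2 / 4) • Lmat n := by
    ext i j; simp [bsplineW1, Lmat, Matrix.smul_apply]
  have h8 : (Real.sqrt 2 / 4) * (Real.sqrt 2 / 4) = 1 / 8 := by
    rw [div_mul_div_comm, Real.mul_self_sqrt (by norm_num)]; norm_num
  rw [h1, Matrix.transpose_smul, Matrix.smul_mul, Matrix.mul_smul, smul_smul, h8]
  ext i j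
  simp only [Matrix.add_apply, Matrix.smul_apply, Matrix.mul_apply, Matrix.transpose_apply,
    Matrix.one_apply, smul_eq_mul]
  rw [Finset.mul_sum, ← Finset.sum_add_distrib, ← Finset.sum_add_distrib]
  have hval : (if i = j then (1 : ℝ) else 0) = (if i.val = j.val then (1 : ℝ) else 0) := by
    rcases eq_or_ne i j with rfl | hne
    · simp
    · rw [if_neg hne, if_neg (by simpa [Fin.ext_iff] using hne)]
  rw [hval]
  exact (Fin.sum_univ_eq_sum_range (fun k =>
      W0e n k i.val * W0e n k j.val + 1 / 8 * (Le n k i.val * Le n k j.val) +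
      W2e n k i.val * W2e n k j.val) n).trans (key n i.val j.val hn i.isLt j.isLt)
end
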